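/- A rectangular diagram of a surface Π can be uniquely recovered from the union of its rectangles: Π is exactly the set of maximal rectangles (with respect to inclusion) contained in ∪_{r∈Π} r. -/

import Mathlib

/-!
Compatibility forces two distinct rectangles of `Π` that share a point which is not a vertex of the
first one to cross: one is narrower in `θ` and taller in `φ`. Given a rectangle `ρ` inside the
union, take a vertical segment of `ρ` off all meridians of `Π`: the `φ`-arcs of the rectangles
meeting it are pairwise nested or disjoint, so by connectedness one of them contains the `φ`-arc of
`ρ`. The same argument applied to the `θ`-arcs of the rectangles whose `φ`-arc contains that of `ρ`
(which cover the `θ`-arc of `ρ` up to finitely many points, hence entirely, being closed) yields a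
single rectangle of `Π` containing `ρ`. Since no rectangle of `Π` lies in another, the maximal
rectangles in the union are exactly those of `Π`.
-/

noncomputable section

/-- The circle `S¹ = ℝ/ℤ`. -/
abbrev S1 := AddCircle (1 : ℝ)

namespace RectDiag

instance : Fact ((0:ℝ) < 1) := ⟨one_pos⟩

/-- The length of the (positively oriented) arc from `x` to `y`, normalized in `[0,1)`. -/
def arcLen (x y : S1) : ℝ := (AddCircle.equivIco 1 0 (y - x) : ℝ)

/-- The closed arc `[x;y]` from `x` to `y` with respect to the standard orientation. -/
def closedArc (x y : S1) : Set S1 :=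
  {z | ∃ t : ℝ, 0 ≤ t ∧ t ≤ arcLen x y ∧ z = x + (t : S1)}

/-- The open arc `(x;y)`. -/
def openArc (x y : S1) : Set S1 :=
  {z | ∃ t : ℝ, 0 < t ∧ t < arcLen x y ∧ z = x + (t : S1)}

/-- The half-open arc `(x;y]`. -/
def arcIoc (x y : S1) : Set S1 :=
  {z | ∃ t : ℝ, 0 < t ∧ t ≤ arcLen x y ∧ z = x + (t : S1)}

/-- A rectangle `[θ1;θ2] × [φ1;φ2]` in the torus `T² = S¹ × S¹`. -/
structure Rect where
  θ1 : S1
  θ2 : S1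
  φ1 : S1
  φ2 : S1
  hθ : θ1 ≠ θ2
  hφ : φ1 ≠ φ2

/-- The underlying subset of the torus. -/
def Rect.toSet (r : Rect) : Set (S1 × S1) := closedArc r.θ1 r.θ2 ×ˢ closedArc r.φ1 r.φ2

/-- The vertex set `V(r) = {θ1,θ2} × {φ1,φ2}`. -/
def Rect.V (r : Rect) : Set (S1 × S1) := ({r.θ1, r.θ2} : Set S1) ×ˢ ({r.φ1, r.φ2} : Set S1)

/-- Two rectangles are compatible if their intersection is empty, or consists of
common vertices, or is a rectangle disjoint from the vertices of both. -/
def Compatible (r1 r2 : Rect) : Prop :=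
  r1.toSet ∩ r2.toSet = ∅ ∨
  (r1.toSet ∩ r2.toSet ⊆ r1.V ∧ r1.toSet ∩ r2.toSet ⊆ r2.V) ∨
  (∃ r : Rect, r1.toSet ∩ r2.toSet = r.toSet ∧ Disjoint r.toSet (r1.V ∪ r2.V))

/-- `v` is a free vertex of the collection `Rs` of rectangles:
it is a vertex of exactly one rectangle of `Rs`. -/
def FreeVertexOf (Rs : Set Rect) (v : S1 × S1) : Prop := ∃! r, r ∈ Rs ∧ v ∈ r.V

/-- A rectangular diagram of a surface. -/
structure RectDiagram where
  rects : Set Rect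
  finite : rects.Finite
  compat : ∀ r1 ∈ rects, ∀ r2 ∈ rects, r1 ≠ r2 → Compatible r1 r2
  free_meridian : ∀ θ : S1, ∃ a b : S1 × S1,
    {v | FreeVertexOf rects v ∧ v.1 = θ} ⊆ {a, b}
  free_longitude : ∀ φ : S1, ∃ a b : S1 × S1,
    {v | FreeVertexOf rects v ∧ v.2 = φ} ⊆ {a, b}

/-- The boundary `∂Π`: the set of free vertices. -/
def RectDiagram.boundary (P : RectDiagram) : Set (S1 × S1) := {v | FreeVertexOf P.rects v}

/-- The set of all vertices of the diagram. -/
def RectDiagram.vertexSet (P : RectDiagram) : Set (S1 × S1) := ⋃ r ∈ P.rects, r.V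

/-- The meridian `m_θ` is an occupied level of `P`. -/
def OccupiedMeridian (P : RectDiagram) (θ : S1) : Prop := ∃ v ∈ P.vertexSet, v.1 = θ

/-- Two chords of `S¹` do not cross. -/
def ChordsNoncross (c c' : Set S1) : Prop :=
  ∀ a b : S1, c = {a, b} → c' ⊆ openArc a b ∨ c' ⊆ openArc b a

/-- A non-crossing chord diagram: a finite set of chords (unordered pairs of distinct
points of `S¹`) that pairwise do not cross. -/
def IsNCD (C : Set (Set S1)) : Prop :=
  C.Finite ∧ (∀ c ∈ C, ∃ a b : S1, a ≠ b ∧ c = {a, b}) ∧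
  ∀ c ∈ C, ∀ c' ∈ C, c ≠ c' → ChordsNoncross c c'

/-- Any chord between two points of `R` can be added to `C` keeping it non-crossing. -/
def Extendable (C : Set (Set S1)) (R : Set S1) : Prop :=
  ∀ a ∈ R, ∀ b ∈ R, a ≠ b → IsNCD (insert ({a, b} : Set S1) C)

/-- A region of a non-crossing chord diagram `C`: a maximal subset `R ⊆ S¹` such that
any chord joining two distinct points of `R` can be added to `C` keeping it non-crossing. -/
def IsRegion (C : Set (Set S1)) (R : Set S1) : Prop :=
  Extendable C R ∧ ∀ R', Extendable C R' → R ⊆ R' → R' = R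

/-- Two regions are neighboring: distinct, their boundaries share exactly two points,
and these two points form a chord of `C`. -/
def Neighboring (C : Set (Set S1)) (R R' : Set S1) : Prop :=
  IsRegion C R ∧ IsRegion C R' ∧ R ≠ R' ∧
  ∃ a b : S1, a ≠ b ∧ frontier R ∩ frontier R' = {a, b} ∧ ({a, b} : Set S1) ∈ C

/-- The points `φ 0, …, φ (k-1)` follow on `S¹` in this circular order. -/
def CircOrd (k : ℕ) (φ : ℕ → S1) : Prop :=
  ∃ t : ℕ → ℝ, (∀ i j : ℕ, i < j → j < k → t i < t j) ∧
    (∀ i : ℕ, i < k → t i < t 0 + 1) ∧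
    ∀ i : ℕ, i < k → φ i = ((t i : ℝ) : S1)

/-- The chords `{φ1,φ2},{φ3,φ4},…,{φ_{k-1},φ_k}` (for `k` even; `0`-based indices). -/
def pairsRemovedEven (k : ℕ) (φ : ℕ → S1) : Set (Set S1) :=
  {c | ∃ i : ℕ, 2*i+1 < k ∧ c = ({φ (2*i), φ (2*i+1)} : Set S1)}

/-- The chords `{φ1,φ2},{φ3,φ4},…,{φ_{k-2},φ_{k-1}}` (for `k` odd). -/
def pairsRemovedOdd (k : ℕ) (φ : ℕ → S1) : Set (Set S1) :=
  {c | ∃ i : ℕ, 2*i+2 < k ∧ c = ({φ (2*i), φ (2*i+1)} : Set S1)}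

/-- The chords `{φ2,φ3},{φ4,φ5},…` added by an event. -/
def pairsAdded (k : ℕ) (φ : ℕ → S1) : Set (Set S1) :=
  {c | ∃ i : ℕ, 2*i+2 < k ∧ c = ({φ (2*i+1), φ (2*i+2)} : Set S1)}

/-- The wrap-around chord `{φ_k, φ1}`. -/
def wrapChord (k : ℕ) (φ : ℕ → S1) : Set S1 := {φ (k-1), φ 0}

/-- The admissible event (in the forward direction) determined by the circularly
ordered points `φ 0, …, φ (k-1)`, of one of the three types. -/
def EventFwd (k : ℕ) (φ : ℕ → S1) (C1 C2 : Set (Set S1)) : Prop :=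
  2 ≤ k ∧ CircOrd k φ ∧
  ((Even k ∧ pairsRemovedEven k φ ⊆ C1 ∧
      C2 = (C1 \ pairsRemovedEven k φ) ∪ pairsAdded k φ) ∨
   (Odd k ∧ pairsRemovedOdd k φ ⊆ C1 ∧
      C2 = (C1 \ pairsRemovedOdd k φ) ∪ pairsAdded k φ) ∨
   (Even k ∧ 4 ≤ k ∧ pairsRemovedEven k φ ⊆ C1 ∧
      C2 = (C1 \ pairsRemovedEven k φ) ∪ (pairsAdded k φ ∪ {wrapChord k φ})))

/-- `C1 ↦ C2` is an admissible event with involved points `φ 0, …, φ (k-1)`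
(one of the diagrams, whichever of the two, is obtained from the other). -/
def AdmissibleEventVia (k : ℕ) (φ : ℕ → S1) (C1 C2 : Set (Set S1)) : Prop :=
  EventFwd k φ C1 C2 ∨ EventFwd k φ C2 C1

/-- `C1 ↦ C2` is an admissible event of non-crossing chord diagrams. -/
def AdmissibleEvent (C1 C2 : Set (Set S1)) : Prop :=
  IsNCD C1 ∧ IsNCD C2 ∧ ∃ (k : ℕ) (φ : ℕ → S1), AdmissibleEventVia k φ C1 C2

/-- The chords of the movie of `P` visible at the meridian `m_{θ0}` (for `θ0` in the
open `θ`-interval of a rectangle of `P`). -/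
def movieAt (P : RectDiagram) (θ0 : S1) : Set (Set S1) :=
  {c | ∃ r ∈ P.rects, θ0 ∈ openArc r.θ1 r.θ2 ∧ c = ({r.φ1, r.φ2} : Set S1)}

/-- The movie diagram `Ψ_P` associated with `P`: the left continuous extension of
`movieAt`. -/
def moviePsi (P : RectDiagram) (θ0 : S1) : Set (Set S1) :=
  {c | ∃ ε > (0:ℝ), ∀ t : ℝ, 0 < t → t < ε → c ∈ movieAt P (θ0 - (t : S1))}

/-- The right limit `Ψ_P(θ0+0)`. -/
def moviePsiRight (P : RectDiagram) (θ0 : S1) : Set (Set S1) :=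
  {c | ∃ ε > (0:ℝ), ∀ t : ℝ, 0 < t → t < ε → c ∈ movieAt P (θ0 + (t : S1))}

/-- A vertical bubble creation move `P ↦ P'` replacing `r = [θ1;θ2]×[φ1;φ2] ∈ P` by
`r1 = [θ1;θ3]×[φ1;φ2]`, `r2 = [θ3;θ4]×[φ2;φ1]`, `r3 = [θ4;θ2]×[φ1;φ2]`. -/
def IsBubbleMove (P P' : RectDiagram) (r r1 r2 r3 : Rect) (θ3 θ4 : S1) : Prop :=
  r ∈ P.rects ∧
  θ3 ∈ openArc r.θ1 r.θ2 ∧ θ4 ∈ openArc θ3 r.θ2 ∧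
  (∀ θ ∈ closedArc θ3 θ4, ¬ OccupiedMeridian P θ) ∧
  (∀ r' ∈ P.rects, ¬ (closedArc θ3 θ4 ×ˢ closedArc r.φ1 r.φ2 ⊆ interior r'.toSet)) ∧
  (r1.θ1 = r.θ1 ∧ r1.θ2 = θ3 ∧ r1.φ1 = r.φ1 ∧ r1.φ2 = r.φ2) ∧
  (r2.θ1 = θ3 ∧ r2.θ2 = θ4 ∧ r2.φ1 = r.φ2 ∧ r2.φ2 = r.φ1) ∧
  (r3.θ1 = θ4 ∧ r3.θ2 = r.θ2 ∧ r3.φ1 = r.φ1 ∧ r3.φ2 = r.φ2) ∧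
  P'.rects = (P.rects \ {r}) ∪ {r1, r2, r3}

open Set Filter Topology

theorem _root_.IsPreconnected.exists_subset_of_nested_closed_cover {α ι : Type*}
    [TopologicalSpace α] {s : Set α} (hs : IsPreconnected s) (hne : s.Nonempty) {I : Set ι}
    (hI : I.Finite)
    {C : ι → Set α} (hC : ∀ i ∈ I, IsClosed (C i))
    (hnest : ∀ i ∈ I, ∀ j ∈ I, (C i ∩ C j).Nonempty → C i ⊆ C j ∨ C j ⊆ C i)
    (hcov : s ⊆ ⋃ i ∈ I, C i) : ∃ i ∈ I, s ⊆ C i := by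
  obtain ⟨z, hz⟩ := hne
  obtain ⟨i₀, hi₀, hzi₀⟩ := mem_iUnion₂.1 (hcov hz)
  obtain ⟨i, ⟨hi, hzi⟩, hmax⟩ :=
    (hI.subset (sep_subset I (z ∈ C ·))).exists_maximalFor C _ ⟨i₀, hi₀, hzi₀⟩
  set J := {j ∈ I | Disjoint (C i) (C j)}
  -- a largest member through `z` and the members disjoint from it separate `s` unless it covers `s`
  have hsplit : s ⊆ C i ∪ ⋃ j ∈ J, C j := by
    intro w hw
    obtain ⟨j, hj, hwj⟩ := mem_iUnion₂.1 (hcov hw)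
    by_cases hij : Disjoint (C i) (C j)
    · exact Or.inr (mem_iUnion₂.2 ⟨j, ⟨hj, hij⟩, hwj⟩)
    rcases hnest i hi j hj (not_disjoint_iff_nonempty_inter.1 hij) with hij | hji
    · exact Or.inl (hmax ⟨hj, hij hzi⟩ hij hwj)
    · exact Or.inl (hji hwj)
  have hJ : Disjoint (C i) (⋃ j ∈ J, C j) := disjoint_iUnion₂_right.2 fun j hj => hj.2
  rcases isPreconnected_iff_subset_of_disjoint_closed.1 hs _ _ (hC i hi)
      ((hI.subset (sep_subset _ _)).isClosed_biUnion fun j hj => hC j hj.1) hsplit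
      (by rw [hJ.inter_eq, inter_empty]) with h | h
  · exact ⟨i, hi, h⟩
  · exact absurd (h hz) (disjoint_left.1 hJ hzi)

theorem coe_arcLen (x y : S1) : ((arcLen x y : ℝ) : S1) = y - x :=
  (AddCircle.equivIco 1 0).symm_apply_apply (y - x)

theorem arcLen_mem_Ico (x y : S1) : arcLen x y ∈ Ico (0 : ℝ) 1 := by
  simpa [arcLen] using (AddCircle.equivIco 1 0 (y - x)).2

theorem arcLen_add_coe {x : S1} {t : ℝ} (ht : t ∈ Ico (0 : ℝ) 1) : arcLen x (x + t) = t := by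
  rw [arcLen, add_sub_cancel_left, AddCircle.equivIco_coe_eq (by simpa using ht)]

theorem arcLen_pos {x y : S1} (h : x ≠ y) : 0 < arcLen x y := by
  refine (arcLen_mem_Ico x y).1.lt_of_ne fun h0 => h ?_
  have := coe_arcLen x y
  rw [← h0, QuotientAddGroup.mk_zero, eq_comm, sub_eq_zero] at this
  exact this.symm

theorem mem_closedArc_iff {x y z : S1} : z ∈ closedArc x y ↔ arcLen x z ≤ arcLen x y := by
  constructor
  · rintro ⟨t, h0, ht, rfl⟩
    rwa [arcLen_add_coe ⟨h0, ht.trans_lt (arcLen_mem_Ico x y).2⟩]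
  · intro h
    exact ⟨arcLen x z, (arcLen_mem_Ico x z).1, h, by rw [coe_arcLen, add_sub_cancel]⟩

theorem closedArc_eq_image (x y : S1) :
    closedArc x y = (fun t : ℝ => x + (t : S1)) '' Icc 0 (arcLen x y) := by
  ext z
  constructor
  · rintro ⟨t, h0, ht, rfl⟩
    exact ⟨t, ⟨h0, ht⟩, rfl⟩
  · rintro ⟨t, ⟨h0, ht⟩, rfl⟩
    exact ⟨t, h0, ht, rfl⟩

theorem continuous_add_coe (x : S1) : Continuous fun t : ℝ => x + (t : S1) :=
  continuous_const.add (AddCircle.continuous_mk' 1)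

theorem isOpenMap_add_coe (x : S1) : IsOpenMap fun t : ℝ => x + (t : S1) :=
  (Homeomorph.addLeft x).isOpenMap.comp QuotientAddGroup.isOpenMap_coe

theorem injOn_add_coe (x : S1) : InjOn (fun t : ℝ => x + (t : S1)) (Ico 0 1) :=
  fun s hs t ht hst => by
    rw [← arcLen_add_coe (x := x) hs, ← arcLen_add_coe (x := x) ht]
    exact congrArg (arcLen x) hst

theorem left_mem_closedArc (x y : S1) : x ∈ closedArc x y :=
  ⟨0, le_rfl, (arcLen_mem_Ico x y).1, by simp⟩

theorem right_mem_closedArc (x y : S1) : y ∈ closedArc x y :=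
  ⟨arcLen x y, (arcLen_mem_Ico x y).1, le_rfl, by rw [coe_arcLen, add_sub_cancel]⟩

theorem pair_subset_closedArc (x y : S1) : ({x, y} : Set S1) ⊆ closedArc x y :=
  insert_subset (left_mem_closedArc x y) (singleton_subset_iff.2 (right_mem_closedArc x y))

theorem isClosed_closedArc (x y : S1) : IsClosed (closedArc x y) := by
  rw [closedArc_eq_image]
  exact (isCompact_Icc.image (continuous_add_coe x)).isClosed

theorem isPreconnected_closedArc (x y : S1) : IsPreconnected (closedArc x y) := by
  rw [closedArc_eq_image]
  exact isPreconnected_Icc.image _ (continuous_add_coe x).continuousOn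

theorem closedArc_infinite {x y : S1} (h : x ≠ y) : (closedArc x y).Infinite := by
  rw [closedArc_eq_image]
  exact (Icc_infinite (arcLen_pos h)).image <| (injOn_add_coe x).mono
    (Icc_subset_Ico_right (arcLen_mem_Ico x y).2)

theorem add_coe_notMem_closedArc {x y : S1} {t : ℝ} (h1 : arcLen x y < t) (h2 : t < 1) :
    x + (t : S1) ∉ closedArc x y := by
  rw [mem_closedArc_iff, arcLen_add_coe ⟨(arcLen_mem_Ico x y).1.trans h1.le, h2⟩]
  exact h1.not_ge

theorem eventually_sub_coe_notMem_closedArc (x y : S1) :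
    ∀ᶠ δ : ℝ in 𝓝[>] 0, x - (δ : S1) ∉ closedArc x y := by
  filter_upwards [Ioo_mem_nhdsGT (sub_pos.2 (arcLen_mem_Ico x y).2)] with δ hδ
  have : x - (δ : S1) = x + ((1 - δ : ℝ) : S1) := by simp [sub_eq_add_neg]
  rw [this]
  exact add_coe_notMem_closedArc (by linarith [hδ.2]) (by linarith [hδ.1])

theorem eventually_add_coe_notMem_closedArc (x y : S1) :
    ∀ᶠ δ : ℝ in 𝓝[>] 0, y + (δ : S1) ∉ closedArc x y := by
  filter_upwards [Ioo_mem_nhdsGT (sub_pos.2 (arcLen_mem_Ico x y).2)] with δ hδ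
  have : y + (δ : S1) = x + ((arcLen x y + δ : ℝ) : S1) := by
    rw [QuotientAddGroup.mk_add, coe_arcLen]; abel
  rw [this]
  exact add_coe_notMem_closedArc (by linarith [hδ.1]) (by linarith [hδ.2])

theorem left_notMem_interior_closedArc (x y : S1) : x ∉ interior (closedArc x y) := by
  intro hx
  have hc : Continuous fun δ : ℝ => x - (δ : S1) :=
    continuous_const.sub (AddCircle.continuous_mk' 1)
  have hlim : Tendsto (fun δ : ℝ => x - (δ : S1)) (𝓝[>] 0) (𝓝 x) := by
    simpa using (hc.tendsto 0).mono_left nhdsWithin_le_nhds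
  obtain ⟨δ, hmem, hout⟩ := ((hlim.eventually (mem_interior_iff_mem_nhds.1 hx)).and
    (eventually_sub_coe_notMem_closedArc x y)).exists
  exact hout hmem

theorem right_notMem_interior_closedArc (x y : S1) : y ∉ interior (closedArc x y) := by
  intro hy
  have hlim : Tendsto (fun δ : ℝ => y + (δ : S1)) (𝓝[>] 0) (𝓝 y) := by
    simpa using ((continuous_add_coe y).tendsto 0).mono_left nhdsWithin_le_nhds
  obtain ⟨δ, hmem, hout⟩ := ((hlim.eventually (mem_interior_iff_mem_nhds.1 hy)).and
    (eventually_add_coe_notMem_closedArc x y)).exists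
  exact hout hmem

theorem frontier_closedArc {x y : S1} (h : x ≠ y) : frontier (closedArc x y) = {x, y} := by
  have hint : (fun t : ℝ => x + (t : S1)) '' Ioo 0 (arcLen x y) ⊆ interior (closedArc x y) :=
    interior_maximal (closedArc_eq_image x y ▸ image_mono Ioo_subset_Icc_self)
      (isOpenMap_add_coe x _ isOpen_Ioo)
  rw [frontier, (isClosed_closedArc x y).closure_eq]
  ext z
  constructor
  · rintro ⟨hz, hzi⟩
    rw [closedArc_eq_image] at hz
    obtain ⟨t, ⟨h0, hL⟩, rfl⟩ := hz
    rcases h0.eq_or_lt with rfl | h0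
    · simp
    rcases hL.eq_or_lt with rfl | hL
    · simp [coe_arcLen]
    exact absurd (hint ⟨t, ⟨h0, hL⟩, rfl⟩) hzi
  · rintro (rfl | rfl)
    · exact ⟨left_mem_closedArc _ _, left_notMem_interior_closedArc _ _⟩
    · exact ⟨right_mem_closedArc _ _, right_notMem_interior_closedArc _ _⟩

theorem closedArc_not_subset_swap {x y : S1} (h : x ≠ y) : ¬ closedArc y x ⊆ closedArc x y := by
  intro hsub
  obtain ⟨δ, hout, hδ⟩ := ((eventually_add_coe_notMem_closedArc x y).and
    (Ioo_mem_nhdsGT (arcLen_pos h.symm))).exists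
  exact hout (hsub ⟨δ, hδ.1.le, hδ.2.le, rfl⟩)

theorem eq_of_closedArc_subset {a b x y : S1} (hab : a ≠ b) (hxy : x ≠ y)
    (hsub : closedArc a b ⊆ closedArc x y) (hends : ({a, b} : Set S1) ⊆ {x, y}) :
    a = x ∧ b = y := by
  obtain ⟨ha | ha, hb | hb⟩ := And.intro (hends (mem_insert a _)) (hends (mem_insert_of_mem a rfl))
  all_goals subst ha hb
  · exact absurd rfl hab
  · exact ⟨rfl, rfl⟩
  · exact absurd hsub (closedArc_not_subset_swap hxy)
  · exact absurd rfl hab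

theorem closedArc_inj {a b x y : S1} (hab : a ≠ b) (hxy : x ≠ y)
    (h : closedArc a b = closedArc x y) : a = x ∧ b = y :=
  eq_of_closedArc_subset hab hxy h.subset <| by
    rw [← frontier_closedArc hab, ← frontier_closedArc hxy, h]

theorem ends_subset_of_closedArc_eq_inter {a b x y x' y' : S1} (hab : a ≠ b) (hxy : x ≠ y)
    (hxy' : x' ≠ y') (h : closedArc a b = closedArc x y ∩ closedArc x' y') :
    ({a, b} : Set S1) ⊆ {x, y} ∪ {x', y'} := by
  rw [← frontier_closedArc hab, h, ← frontier_closedArc hxy, ← frontier_closedArc hxy']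
  exact (frontier_inter_subset _ _).trans (union_subset_union inter_subset_left inter_subset_right)

theorem closedArc_subset_closure_diff {x y : S1} (h : x ≠ y) {E : Set S1} (hE : E.Finite) :
    closedArc x y ⊆ closure (closedArc x y \ E) := by
  set g : ℝ → S1 := fun t => x + (t : S1)
  set F := Ioo 0 (arcLen x y) ∩ g ⁻¹' E
  have hF : F.Finite := by
    refine Finite.of_finite_image (hE.subset ?_) ((injOn_add_coe x).mono ?_)
    · exact (image_mono inter_subset_right).trans (image_preimage_subset g E)
    · exact inter_subset_left.trans (Ioo_subset_Ico_self.trans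
        (Ico_subset_Ico_right (arcLen_mem_Ico x y).2.le))
  have hIcc : Icc 0 (arcLen x y) ⊆ closure (Ioo 0 (arcLen x y) ∩ (univ \ F)) := by
    rw [← closure_Ioo (arcLen_pos h).ne]
    exact closure_minimal ((dense_univ.sdiff_finite hF).open_subset_closure_inter isOpen_Ioo)
      isClosed_closure
  rw [closedArc_eq_image]
  refine (image_mono hIcc).trans <|
    (image_closure_subset_closure_image (continuous_add_coe x)).trans (closure_mono ?_)
  rintro _ ⟨t, ⟨ht, -, htF⟩, rfl⟩
  exact ⟨⟨t, Ioo_subset_Icc_self ht, rfl⟩, fun htE => htF ⟨ht, htE⟩⟩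

namespace Rect

def Crosses (r1 r2 : Rect) : Prop :=
  closedArc r1.θ1 r1.θ2 ⊆ closedArc r2.θ1 r2.θ2 ∧ closedArc r2.φ1 r2.φ2 ⊆ closedArc r1.φ1 r1.φ2

theorem toSet_nonempty (r : Rect) : r.toSet.Nonempty :=
  ⟨(r.θ1, r.φ1), left_mem_closedArc _ _, left_mem_closedArc _ _⟩

theorem V_subset_toSet (r : Rect) : r.V ⊆ r.toSet :=
  prod_mono (pair_subset_closedArc _ _) (pair_subset_closedArc _ _)

theorem exists_mem_toSet_notMem_V (r : Rect) : ∃ p ∈ r.toSet, p ∉ r.V := by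
  obtain ⟨z, hz, hzV⟩ := ((closedArc_infinite r.hθ).sdiff (toFinite {r.θ1, r.θ2})).nonempty
  exact ⟨(z, r.φ1), ⟨hz, left_mem_closedArc _ _⟩, fun h => hzV h.1⟩

theorem toSet_injective : Function.Injective Rect.toSet := by
  intro r r' h
  obtain ⟨hθ, hφ⟩ := (prod_eq_prod_iff_of_nonempty r.toSet_nonempty).1 h
  obtain ⟨h1, h2⟩ := closedArc_inj r.hθ r'.hθ hθ
  obtain ⟨h3, h4⟩ := closedArc_inj r.hφ r'.hφ hφ
  cases r; cases r'
  simp_all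

variable {r1 r2 s : Rect}

theorem crosses_of_left_end
    (hθ : closedArc s.θ1 s.θ2 = closedArc r1.θ1 r1.θ2 ∩ closedArc r2.θ1 r2.θ2)
    (hφ : closedArc s.φ1 s.φ2 = closedArc r1.φ1 r1.φ2 ∩ closedArc r2.φ1 r2.φ2)
    (hV1 : Disjoint s.V r1.V) (hV2 : Disjoint s.V r2.V) (hend : s.θ1 ∈ ({r1.θ1, r1.θ2} : Set S1)) :
    r1.Crosses r2 := by
  have hφends : ({s.φ1, s.φ2} : Set S1) ⊆ {r2.φ1, r2.φ2} := fun b hb =>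
    (ends_subset_of_closedArc_eq_inter s.hφ r1.hφ r2.hφ hφ hb).resolve_left fun hb1 =>
      disjoint_left.1 hV1 (mk_mem_prod (mem_insert _ _) hb) (mk_mem_prod hend hb1)
  obtain ⟨hφ1, hφ2⟩ := eq_of_closedArc_subset s.hφ r2.hφ (hφ ▸ inter_subset_right) hφends
  have hθends : ({s.θ1, s.θ2} : Set S1) ⊆ {r1.θ1, r1.θ2} := fun a ha =>
    (ends_subset_of_closedArc_eq_inter s.hθ r1.hθ r2.hθ hθ ha).resolve_right fun ha2 =>
      disjoint_left.1 hV2 (mk_mem_prod ha (mem_insert _ _)) (mk_mem_prod ha2 (hφ1 ▸ mem_insert _ _))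
  obtain ⟨hθ1, hθ2⟩ := eq_of_closedArc_subset s.hθ r1.hθ (hθ ▸ inter_subset_left) hθends
  refine ⟨?_, ?_⟩
  · rw [← hθ1, ← hθ2, hθ]
    exact inter_subset_right
  · rw [← hφ1, ← hφ2, hφ]
    exact inter_subset_left

theorem crosses_or_crosses_of_inter_eq (hs : r1.toSet ∩ r2.toSet = s.toSet)
    (hV : Disjoint s.toSet (r1.V ∪ r2.V)) : r1.Crosses r2 ∨ r2.Crosses r1 := by
  rw [toSet, toSet, prod_inter_prod] at hs
  obtain ⟨hθ, hφ⟩ := (prod_eq_prod_iff_of_nonempty (hs ▸ s.toSet_nonempty)).1 hs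
  have hV1 : Disjoint s.V r1.V := (hV.mono_left s.V_subset_toSet).mono_right subset_union_left
  have hV2 : Disjoint s.V r2.V := (hV.mono_left s.V_subset_toSet).mono_right subset_union_right
  rcases ends_subset_of_closedArc_eq_inter s.hθ r1.hθ r2.hθ hθ.symm (mem_insert _ _) with h | h
  · exact Or.inl (crosses_of_left_end hθ.symm hφ.symm hV1 hV2 h)
  · rw [inter_comm] at hθ hφ
    exact Or.inr (crosses_of_left_end hθ.symm hφ.symm hV2 hV1 h)

end Rect

theorem Compatible.crosses_or_crosses {r1 r2 : Rect} (h : Compatible r1 r2) {p : S1 × S1}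
    (hp1 : p ∈ r1.toSet) (hp2 : p ∈ r2.toSet) (hpV : p ∉ r1.V) :
    r1.Crosses r2 ∨ r2.Crosses r1 := by
  rcases h with h | ⟨h, -⟩ | ⟨s, hs, hV⟩
  · exact absurd (h ▸ ⟨hp1, hp2⟩ : p ∈ (∅ : Set (S1 × S1))) (notMem_empty p)
  · exact absurd (h ⟨hp1, hp2⟩) hpV
  · exact Rect.crosses_or_crosses_of_inter_eq hs hV

namespace RectDiagram

variable (P : RectDiagram)

theorem eq_of_toSet_subset {r r' : Rect} (hr : r ∈ P.rects) (hr' : r' ∈ P.rects)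
    (h : r.toSet ⊆ r'.toSet) : r = r' := by
  by_contra hne
  rcases P.compat r hr r' hr' hne with h' | ⟨h', -⟩ | ⟨s, hs, hV⟩
  all_goals rw [inter_eq_left.2 h] at *
  · exact r.toSet_nonempty.ne_empty h'
  · obtain ⟨p, hp, hpV⟩ := r.exists_mem_toSet_notMem_V
    exact hpV (h' hp)
  · obtain ⟨v, hv⟩ : r.V.Nonempty := ⟨(r.θ1, r.φ1), mem_insert _ _, mem_insert _ _⟩
    exact disjoint_left.1 hV (hs ▸ r.V_subset_toSet hv) (Or.inl hv)

theorem exists_segment_subset_of_subset_iUnion {x a b : S1}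
    (hx : ∀ r ∈ P.rects, x ≠ r.θ1 ∧ x ≠ r.θ2)
    (hsub : {x} ×ˢ closedArc a b ⊆ ⋃ r ∈ P.rects, r.toSet) :
    ∃ r ∈ P.rects, x ∈ closedArc r.θ1 r.θ2 ∧ closedArc a b ⊆ closedArc r.φ1 r.φ2 := by
  set I := {r ∈ P.rects | x ∈ closedArc r.θ1 r.θ2}
  have hnest : ∀ r ∈ I, ∀ r' ∈ I, (closedArc r.φ1 r.φ2 ∩ closedArc r'.φ1 r'.φ2).Nonempty →
      closedArc r.φ1 r.φ2 ⊆ closedArc r'.φ1 r'.φ2 ∨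
        closedArc r'.φ1 r'.φ2 ⊆ closedArc r.φ1 r.φ2 := by
    rintro r ⟨hr, hxr⟩ r' ⟨hr', hxr'⟩ ⟨y, hy, hy'⟩
    obtain rfl | hne := eq_or_ne r r'
    · exact Or.inl subset_rfl
    rcases (P.compat r hr r' hr' hne).crosses_or_crosses (p := (x, y)) ⟨hxr, hy⟩ ⟨hxr', hy'⟩
      (fun hV => hV.1.elim (hx r hr).1 (hx r hr).2) with h | h
    · exact Or.inr h.2
    · exact Or.inl h.2
  have hcov : closedArc a b ⊆ ⋃ r ∈ I, closedArc r.φ1 r.φ2 := by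
    intro y hy
    obtain ⟨r, hr, hxy⟩ := mem_iUnion₂.1 (hsub (mk_mem_prod (mem_singleton x) hy))
    exact mem_iUnion₂.2 ⟨r, ⟨hr, hxy.1⟩, hxy.2⟩
  obtain ⟨r, ⟨hr, hxr⟩, hab⟩ := (isPreconnected_closedArc a b).exists_subset_of_nested_closed_cover
    ⟨a, left_mem_closedArc a b⟩ (P.finite.subset (sep_subset _ _))
    (fun r _ => isClosed_closedArc _ _) hnest hcov
  exact ⟨r, hr, hxr, hab⟩

theorem exists_superset_of_subset_iUnion {ρ : Rect}
    (hρ : ρ.toSet ⊆ ⋃ r ∈ P.rects, r.toSet) : ∃ r ∈ P.rects, ρ.toSet ⊆ r.toSet := by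
  set I := {r ∈ P.rects | closedArc ρ.φ1 ρ.φ2 ⊆ closedArc r.φ1 r.φ2}
  have hnest : ∀ r ∈ I, ∀ r' ∈ I, (closedArc r.θ1 r.θ2 ∩ closedArc r'.θ1 r'.θ2).Nonempty →
      closedArc r.θ1 r.θ2 ⊆ closedArc r'.θ1 r'.θ2 ∨
        closedArc r'.θ1 r'.θ2 ⊆ closedArc r.θ1 r.θ2 := by
    rintro r ⟨hr, hφr⟩ r' ⟨hr', hφr'⟩ ⟨x, hx, hx'⟩
    obtain rfl | hne := eq_or_ne r r'
    · exact Or.inl subset_rfl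
    obtain ⟨y, hy, hyV⟩ := ((closedArc_infinite ρ.hφ).sdiff (toFinite {r.φ1, r.φ2})).nonempty
    rcases (P.compat r hr r' hr' hne).crosses_or_crosses (p := (x, y)) ⟨hx, hφr hy⟩
      ⟨hx', hφr' hy⟩ (fun hV => hyV hV.2) with h | h
    · exact Or.inl h.1
    · exact Or.inr h.1
  have hcov : closedArc ρ.θ1 ρ.θ2 ⊆ ⋃ r ∈ I, closedArc r.θ1 r.θ2 := by
    set E := ⋃ r ∈ P.rects, ({r.θ1, r.θ2} : Set S1)
    have hE : E.Finite := P.finite.biUnion fun r _ => toFinite _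
    refine (closedArc_subset_closure_diff ρ.hθ hE).trans (closure_minimal ?_
      ((P.finite.subset (sep_subset _ _)).isClosed_biUnion fun r _ => isClosed_closedArc _ _))
    rintro x ⟨hxρ, hxE⟩
    obtain ⟨r, hr, hxr, hφ⟩ := P.exists_segment_subset_of_subset_iUnion
      (fun r hr => ⟨fun h => hxE (mem_iUnion₂.2 ⟨r, hr, Or.inl h⟩),
        fun h => hxE (mem_iUnion₂.2 ⟨r, hr, Or.inr h⟩)⟩)
      (fun p ⟨hp1, hp2⟩ => hρ ⟨(mem_singleton_iff.1 hp1) ▸ hxρ, hp2⟩)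
    exact mem_iUnion₂.2 ⟨r, ⟨hr, hφ⟩, hxr⟩
  obtain ⟨r, ⟨hr, hφ⟩, hθ⟩ :=
    (isPreconnected_closedArc ρ.θ1 ρ.θ2).exists_subset_of_nested_closed_cover
      ⟨ρ.θ1, left_mem_closedArc _ _⟩ (P.finite.subset (sep_subset _ _))
      (fun r _ => isClosed_closedArc _ _) hnest hcov
  exact ⟨r, hr, prod_mono hθ hφ⟩

end RectDiagram

/-- a rectangular diagram of a surface is exactly the set of maximal
rectangles contained in the union of its rectangles. -/
theorem diagram_eq_maximal_rects (P : RectDiagram) (r : Rect) :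
    r ∈ P.rects ↔
      (r.toSet ⊆ (⋃ r' ∈ P.rects, r'.toSet) ∧
       ∀ r' : Rect, r.toSet ⊆ r'.toSet → r'.toSet ⊆ (⋃ r'' ∈ P.rects, r''.toSet) →
         r'.toSet = r.toSet) := by
  constructor
  · intro hr
    refine ⟨subset_biUnion_of_mem (u := Rect.toSet) hr, fun r' hrr' hr' => ?_⟩
    obtain ⟨r₀, hr₀, hr'r₀⟩ := P.exists_superset_of_subset_iUnion hr'
    obtain rfl := P.eq_of_toSet_subset hr hr₀ (hrr'.trans hr'r₀)
    exact hr'r₀.antisymm hrr'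
  · rintro ⟨hr, hmax⟩
    obtain ⟨r₀, hr₀, hrr₀⟩ := P.exists_superset_of_subset_iUnion hr
    rwa [← Rect.toSet_injective (hmax r₀ hrr₀ (subset_biUnion_of_mem (u := Rect.toSet) hr₀))]

end RectDiag
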